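/- For every positive integer q, (φ(q)/q)·λ(q) = (1/ζ(2))·Σ_{n=1}^∞ (I_{square}(n)/n)·c_q(n), where I_{square}(n) = 1 if n is a perfect square and 0 otherwise; equivalently (φ(q)/q)·λ(q) = (1/ζ(2))·Σ_{m=1}^∞ c_q(m²)/m². -/

import Mathlib

/-!
Expanding `c_q(n) = ∑_{d ∣ q, d ∣ n} μ(q/d) d` and exchanging the finite sum over `d ∣ q` with the
series reduces the claim to `∑_{n square, d ∣ n} 1/n = ζ(2)/s(d)²` for `s(d) = ceilRoot 2 d`, which
holds because `d ∣ m²` iff `s(d) ∣ m`. It remains to show `∑_{d ∣ q} μ(q/d) d/s(d)² = (φ(q)/q) λ(q)`.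
Both `n ↦ n/s(n)²` and `n ↦ (φ(n)/n) λ(n)` are multiplicative, so this Möbius convolution identity
is checked on prime powers, where `p^j/s(p^j)²` is `1` or `1/p` according to the parity of `j`.
-/

open Finset Filter Topology

/-- The Ramanujan sum. -/
noncomputable def ramanujanSum (q n : ℕ) : ℤ :=
  ∑ d ∈ (Nat.gcd q n).divisors, ArithmeticFunction.moebius (q / d) * d

/-- The Liouville function `λ(n) = (-1)^Ω(n)`. -/
noncomputable def liouville (n : ℕ) : ℤ := (-1) ^ (ArithmeticFunction.cardFactors n)

open ArithmeticFunction hiding liouville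
open scoped Real
open scoped ArithmeticFunction.Moebius

namespace Nat

theorem ceilRoot_mul_of_coprime {n a b : ℕ} (hab : a.Coprime b) :
    ceilRoot n (a * b) = ceilRoot n a * ceilRoot n b := by
  rcases eq_or_ne n 0 with rfl | hn
  · simp
  rcases eq_or_ne a 0 with rfl | ha
  · simp
  rcases eq_or_ne b 0 with rfl | hb
  · simp
  simp only [ceilRoot, hn, ha, hb, mul_eq_zero, or_self, if_false, factorization_mul ha hb]
  exact Finsupp.prod_add_index_of_disjoint (by
    simpa only [support_factorization] using hab.disjoint_primeFactors) _

theorem ceilRoot_prime_pow {n p : ℕ} (hn : n ≠ 0) (hp : p.Prime) (k : ℕ) :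
    ceilRoot n (p ^ k) = p ^ ((k + n - 1) / n) := by
  rw [ceilRoot, if_neg (by simp [hn, hp.ne_zero]), hp.factorization_pow,
    Finsupp.prod_single_index (by simp [Nat.pos_of_ne_zero hn])]

end Nat

namespace ArithmeticFunction

theorem coe_moebius_mul_apply_prime_pow_succ {R : Type*} [CommRing R] (f : ArithmeticFunction R)
    {p : ℕ} (hp : p.Prime) (k : ℕ) :
    ((μ : ArithmeticFunction R) * f) (p ^ (k + 1)) = f (p ^ (k + 1)) - f (p ^ k) := by
  rw [mul_comm, mul_apply,
    Nat.sum_divisorsAntidiagonal fun a b => f a * (μ : ArithmeticFunction R) b,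
    Nat.sum_divisors_prime_pow hp, sum_range_succ, sum_range_succ]
  have hvanish : ∀ i ∈ range k,
      f (p ^ i) * (μ : ArithmeticFunction R) (p ^ (k + 1) / p ^ i) = 0 := by
    intro i hi
    have hik : i < k := mem_range.1 hi
    rw [Nat.pow_div (by omega) hp.pos, intCoe_apply, moebius_apply_prime_pow hp (by omega),
      if_neg (by omega), Int.cast_zero, mul_zero]
  rw [sum_eq_zero hvanish, Nat.pow_div (by omega) hp.pos, Nat.add_sub_cancel_left, pow_one,
    Nat.div_self (pow_pos hp.pos _), intCoe_apply, intCoe_apply, moebius_apply_prime hp,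
    moebius_apply_one]
  push_cast
  ring

end ArithmeticFunction

theorem HasSum.tendsto_sum_Icc_one {M : Type*} [AddCommMonoid M] [TopologicalSpace M]
    {f : ℕ → M} {a : M} (hf : HasSum f a) (h0 : f 0 = 0) :
    Tendsto (fun x => ∑ n ∈ Icc 1 x, f n) atTop (𝓝 a) := by
  refine ((tendsto_add_atTop_iff_nat 1).2 hf.tendsto_sum_nat).congr fun x => ?_
  rw [range_eq_Ico, sum_eq_sum_Ico_succ_bot (Nat.succ_pos x), h0, _root_.zero_add]
  rfl

/-- `ceilRoot 2 n ^ 2` is the least square divisible by `n`, so this is the reciprocal of the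
squarefree part of `n`. -/
noncomputable def invSquarefreePart : ArithmeticFunction ℝ :=
  ⟨fun n => n / (Nat.ceilRoot 2 n : ℝ) ^ 2, by simp⟩

theorem invSquarefreePart_apply (n : ℕ) :
    invSquarefreePart n = n / (Nat.ceilRoot 2 n : ℝ) ^ 2 := rfl

theorem isMultiplicative_invSquarefreePart : invSquarefreePart.IsMultiplicative := by
  refine ⟨by simp [invSquarefreePart_apply], fun {m n} hmn => ?_⟩
  simp only [invSquarefreePart_apply, Nat.ceilRoot_mul_of_coprime hmn]
  push_cast
  rw [mul_pow, mul_div_mul_comm]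

theorem invSquarefreePart_apply_prime_pow {p : ℕ} (hp : p.Prime) (j : ℕ) :
    invSquarefreePart (p ^ j) = if Even j then 1 else (p : ℝ)⁻¹ := by
  have hp0 : (p : ℝ) ≠ 0 := Nat.cast_ne_zero.2 hp.ne_zero
  rw [invSquarefreePart_apply, Nat.ceilRoot_prime_pow two_ne_zero hp]
  push_cast
  rw [← pow_mul]
  obtain ⟨c, rfl | rfl⟩ := Nat.even_or_odd' j
  · rw [if_pos (even_two_mul c), show (2 * c + 1) / 2 * 2 = 2 * c by omega,
      div_self (pow_ne_zero _ hp0)]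
  · rw [if_neg (by simp [parity_simps]), show (2 * c + 1 + 1) / 2 * 2 = 2 * c + 1 + 1 by omega,
      pow_succ _ (2 * c + 1), div_mul_cancel_left₀ (pow_ne_zero _ hp0)]

noncomputable def totientRatioLiouville : ArithmeticFunction ℝ :=
  ⟨fun n => (n.totient : ℝ) / n * liouville n, by simp⟩

theorem totientRatioLiouville_apply (n : ℕ) :
    totientRatioLiouville n = (n.totient : ℝ) / n * liouville n := rfl

theorem isMultiplicative_totientRatioLiouville : totientRatioLiouville.IsMultiplicative := by
  refine ⟨by simp [totientRatioLiouville_apply, liouville], fun {m n} hmn => ?_⟩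
  rcases eq_or_ne m 0 with rfl | hm
  · simp [totientRatioLiouville_apply]
  rcases eq_or_ne n 0 with rfl | hn
  · simp [totientRatioLiouville_apply]
  simp only [totientRatioLiouville_apply, liouville, Nat.totient_mul hmn, cardFactors_mul hm hn]
  push_cast
  ring

theorem coe_moebius_mul_invSquarefreePart :
    (μ : ArithmeticFunction ℝ) * invSquarefreePart = totientRatioLiouville := by
  refine (IsMultiplicative.eq_iff_eq_on_prime_powers _
    (isMultiplicative_moebius.intCast.mul isMultiplicative_invSquarefreePart) _
    isMultiplicative_totientRatioLiouville).2 fun p i hp => ?_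
  have hp0 : (p : ℝ) ≠ 0 := Nat.cast_ne_zero.2 hp.ne_zero
  rcases i with _ | k
  · simp [isMultiplicative_totientRatioLiouville.map_one,
      (isMultiplicative_moebius.intCast.mul isMultiplicative_invSquarefreePart).map_one]
  rw [coe_moebius_mul_apply_prime_pow_succ _ hp, invSquarefreePart_apply_prime_pow hp,
    invSquarefreePart_apply_prime_pow hp, totientRatioLiouville_apply, liouville,
    cardFactors_apply_prime_pow hp, Nat.totient_prime_pow_succ hp, Nat.cast_mul,
    Nat.cast_sub hp.one_le]
  push_cast
  rcases Nat.even_or_odd k with hk | hk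
  · rw [if_neg (by simpa [parity_simps] using hk), if_pos hk, (hk.add_one).neg_one_pow]
    field_simp
    ring
  · rw [if_pos (by simpa [parity_simps] using hk), if_neg (Nat.not_even_iff_odd.2 hk),
      (hk.add_one).neg_one_pow]
    field_simp
    ring

theorem sum_divisors_moebius_mul_div_ceilRoot_sq (q : ℕ) :
    ∑ d ∈ q.divisors, (μ (q / d) : ℝ) * d / (Nat.ceilRoot 2 d : ℝ) ^ 2 =
      (q.totient : ℝ) / q * liouville q := by
  rw [← totientRatioLiouville_apply, ← coe_moebius_mul_invSquarefreePart, mul_apply,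
    Nat.sum_divisorsAntidiagonal' (fun a b => (μ : ArithmeticFunction ℝ) a * invSquarefreePart b)]
  simp only [intCoe_apply, invSquarefreePart_apply, mul_div_assoc]

theorem hasSum_one_div_sq_of_dvd {s : ℕ} (hs : s ≠ 0) :
    HasSum (fun m : ℕ => if s ∣ m then 1 / (m : ℝ) ^ 2 else 0) (π ^ 2 / 6 / s ^ 2) := by
  have hinj : Function.Injective (s * ·) := fun a b h =>
    Nat.eq_of_mul_eq_mul_left (Nat.pos_of_ne_zero hs) h
  refine (hinj.hasSum_iff fun m hm => if_neg fun ⟨k, hk⟩ => hm ⟨k, hk.symm⟩).1 ?_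
  refine (hasSum_zeta_two.div_const ((s : ℝ) ^ 2)).congr_fun fun k => ?_
  simp only [Function.comp_apply, dvd_mul_right, if_true]
  push_cast
  ring

theorem hasSum_one_div_of_isSquare_of_dvd {d : ℕ} (hd : d ≠ 0) :
    HasSum (fun n : ℕ => if IsSquare n ∧ d ∣ n then 1 / (n : ℝ) else 0)
      (π ^ 2 / 6 / (Nat.ceilRoot 2 d : ℝ) ^ 2) := by
  have hinj : Function.Injective (fun m : ℕ => m ^ 2) := Nat.pow_left_injective two_ne_zero
  refine (hinj.hasSum_iff fun n hn => if_neg fun ⟨⟨m, hm⟩, _⟩ => hn ⟨m, by simp [hm, sq]⟩).1 ?_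
  refine (hasSum_one_div_sq_of_dvd (Nat.ceilRoot_ne_zero.2 ⟨two_ne_zero, hd⟩)).congr_fun
    fun m => ?_
  simp [Nat.dvd_pow_iff_ceilRoot_dvd two_ne_zero, IsSquare.sq]

theorem ramanujanSum_eq_sum_filter_dvd {q : ℕ} (hq : q ≠ 0) (n : ℕ) :
    ramanujanSum q n = ∑ d ∈ q.divisors with d ∣ n, μ (q / d) * d := by
  refine sum_congr ?_ fun _ _ => rfl
  ext d
  simp [Nat.dvd_gcd_iff, hq]

theorem hasSum_isSquare_div_mul_ramanujanSum {q : ℕ} (hq : q ≠ 0) :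
    HasSum (fun n : ℕ => (if IsSquare n then 1 / (n : ℝ) else 0) * ramanujanSum q n)
      (π ^ 2 / 6 * ((q.totient : ℝ) / q * liouville q)) := by
  have hsum := hasSum_sum fun d (hd : d ∈ q.divisors) =>
    (hasSum_one_div_of_isSquare_of_dvd (Nat.ne_of_gt (Nat.pos_of_mem_divisors hd))).mul_left
      ((μ (q / d) : ℝ) * d)
  have hvalue : π ^ 2 / 6 * ((q.totient : ℝ) / q * liouville q) =
      ∑ d ∈ q.divisors, (μ (q / d) : ℝ) * d * (π ^ 2 / 6 / (Nat.ceilRoot 2 d : ℝ) ^ 2) := by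
    rw [← sum_divisors_moebius_mul_div_ceilRoot_sq, mul_sum]
    exact sum_congr rfl fun d _ => by ring
  rw [hvalue]
  refine hsum.congr_fun fun n => ?_
  rw [ramanujanSum_eq_sum_filter_dvd hq, Int.cast_sum, mul_sum, sum_filter]
  refine sum_congr rfl fun d _ => ?_
  by_cases hn : IsSquare n <;> by_cases hdn : d ∣ n <;> simp [hn, hdn, mul_comm]

theorem dual_rf_totient_liouville (q : ℕ) (hq : 0 < q) :
    Tendsto (fun x : ℕ => ∑ n ∈ Finset.Icc 1 x,
        (if IsSquare n then (1 : ℝ) / n else 0) * (ramanujanSum q n : ℝ))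
      atTop
      (𝓝 (Real.pi ^ 2 / 6 * ((Nat.totient q : ℝ) / q * (liouville q : ℝ)))) :=
  (hasSum_isSquare_div_mul_ramanujanSum hq.ne').tendsto_sum_Icc_one (by simp)
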